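/- arXiv:1410.6533 — 2 statements merged into one kernel-verified Lean document; each statement's English description precedes it below -/
import Mathlib

section
/- Let T be a finite tree, and for each vertex i define s_i = 1 if i is a leaf, and otherwise s_i = 1 + ∑(values s_j over neighbors j with one maximal value removed), assuming these values form the stabilized fixed point where for each non-median vertex i, s_i equals the number of vertices in the component of T - e containing i, where e is the edge from i toward the median along the unique path. Then for each non-leaf vertex i that is not a median, i has exactly one neighbor j with s_j > s_i, namely its neighbor on the path toward the nearest median. -/
open SimpleGraph

/-- If `r` is a path from `a` to `m` and `x` lies on `r`, then any vertex all of whose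
paths to `m` pass through `a` also has all its paths to `m` passing through `x`. -/
lemma aux_through {V : Type*} [DecidableEq V] {G : SimpleGraph V}
    (hac : G.IsAcyclic) {m a x : V} (r : G.Walk a m) (hr : r.IsPath)
    (hx : x ∈ r.support) {v : V}
    (hv : ∀ q : G.Walk v m, q.IsPath → a ∈ q.support) :
    ∀ q : G.Walk v m, q.IsPath → x ∈ q.support := by
  intro q hq
  have ha : a ∈ q.support := hv q hq
  have hd : (q.dropUntil a ha).IsPath := hq.dropUntil ha
  have heq : q.dropUntil a ha = r := by
    have := hac.path_unique ⟨q.dropUntil a ha, hd⟩ ⟨r, hr⟩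
    exact congrArg Subtype.val this
  exact q.support_dropUntil_subset ha (heq ▸ hx)

/-- With stabilized `s`-values (where `s i` is the number of vertices in the component
of `i` when the tree is rooted at a median `m`, i.e. the number of vertices whose path
to `m` passes through `i`), every non-leaf, non-median vertex `i` has exactly one
neighbor `j` with `s j > s i`, namely its neighbor on the path from `i` toward the
median. -/
theorem unique_increasing_neighbor_toward_median {V : Type*} [Fintype V] [DecidableEq V]
    (G : SimpleGraph V) [DecidableRel G.Adj] (hT : G.Connected ∧ G.IsAcyclic)
    (m : V) (hm : ∀ u : V, ∑ i : V, G.dist i m ≤ ∑ i : V, G.dist i u)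
    (s : V → ℕ)
    (hs : ∀ i : V, s i =
      Set.ncard {v : V | ∀ q : G.Walk v m, q.IsPath → i ∈ q.support})
    (i : V) (hleaf : 1 < G.degree i)
    (hnotmed : ¬ ∀ u : V, ∑ v : V, G.dist v i ≤ ∑ v : V, G.dist v u) :
    ∀ p : G.Walk i m, p.IsPath →
      G.Adj i (p.getVert 1) ∧ s i < s (p.getVert 1) ∧
      ∀ j : V, G.Adj i j → s i < s j → j = p.getVert 1 := by
  obtain ⟨-, hac⟩ := hT
  intro p hp
  cases p with
  | nil => exact absurd hm hnotmed
  | @cons _ b _ hadj q =>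
    have hb1 : (Walk.cons hadj q).getVert 1 = b := by
      simp [Walk.getVert_cons_succ]
    rw [hb1]
    obtain ⟨hq, hiq⟩ := (Walk.cons_isPath_iff hadj q).mp hp
    refine ⟨hadj, ?_, ?_⟩
    · -- s i < s b
      rw [hs i, hs b]
      refine Set.ncard_lt_ncard ⟨?_, ?_⟩ (Set.toFinite _)
      · intro v hv
        exact aux_through hac (Walk.cons hadj q) hp
          (by simp [Walk.support_cons, q.start_mem_support]) hv
      · intro hsub
        have hb : b ∈ {v : V | ∀ q : G.Walk v m, q.IsPath → b ∈ q.support} :=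
          fun r _ => r.start_mem_support
        have : i ∈ q.support := hsub hb q hq
        exact hiq this
    · -- uniqueness
      intro j hij hsij
      by_contra hjb
      -- first: j ∉ p.support
      have hjp : j ∉ (Walk.cons hadj q).support := by
        intro hjs
        set p := Walk.cons hadj q with hpdef
        have ht : (p.takeUntil j hjs).IsPath := hp.takeUntil hjs
        have hsing : p.takeUntil j hjs = Walk.cons hij Walk.nil := by
          have := hac.path_unique ⟨p.takeUntil j hjs, ht⟩ (Path.singleton hij)
          exact congrArg Subtype.val this
        have hpeq : p = Walk.cons hij (p.dropUntil j hjs) := by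
          conv_lhs => rw [← p.take_spec hjs, hsing]
          rw [Walk.cons_append, Walk.nil_append]
        have h1 : p.getVert 1 = j := by
          rw [hpeq]
          simp [Walk.getVert_cons_succ]
        rw [hb1] at h1
        exact hjb (h1.symm)
      -- build the path from j to m through i
      have hr : (Walk.cons hij.symm (Walk.cons hadj q)).IsPath :=
        (Walk.cons_isPath_iff _ _).mpr ⟨hp, hjp⟩
      -- show s j < s i, contradiction
      have hlt : s j < s i := by
        rw [hs i, hs j]
        refine Set.ncard_lt_ncard ⟨?_, ?_⟩ (Set.toFinite _)
        · intro v hv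
          exact aux_through hac (Walk.cons hij.symm (Walk.cons hadj q)) hr
            (by simp [Walk.support_cons]) hv
        · intro hsub
          have hi : i ∈ {v : V | ∀ q : G.Walk v m, q.IsPath → i ∈ q.support} :=
            fun r _ => r.start_mem_support
          have : j ∈ (Walk.cons hadj q).support := hsub hi (Walk.cons hadj q) hp
          exact hjp this
      omega
end

section
/- If the single leader of a noisy consensus system on a finite tree is moved from vertex u to an adjacent vertex v, the total variance changes by F_tot({v}) - F_tot({u}) = (1/2)(n_u - n_v), where n_u and n_v are the numbers of vertices in the components of T minus edge {u,v} containing u and v respectively; hence moving the leader toward the larger component strictly decreases total variance. -/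
/-!
Removing the edge `uv` of a tree leaves every vertex `x` on exactly one side, and the unique path
from `x` to the far endpoint runs through the near one: on `u`'s side `d(x, v) = d(x, u) + 1`, on
`v`'s side `d(x, u) = d(x, v) + 1`. Summing over all vertices, the distances to `v` exceed those
to `u` by `n_u - n_v` in total.
-/

lemma Finset.sum_ite_mem_eq_ncard {α R : Type*} [Fintype α] [AddCommMonoidWithOne R] (s : Set α)
    [DecidablePred (· ∈ s)] : ∑ x, (if x ∈ s then (1 : R) else 0) = s.ncard := by
  rw [Finset.sum_boole, Set.ncard_eq_toFinset_card']
  congr 2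
  ext
  simp

namespace SimpleGraph

variable {V : Type*} {G : SimpleGraph V} {u v x : V}

/-- The vertices all of whose paths to `v` pass through `u`: for an edge `uv` of a tree, the
component of `u` once the edge is deleted. -/
def behind (G : SimpleGraph V) (u v : V) : Set V :=
  {x | ∀ q : G.Walk x v, q.IsPath → u ∈ q.support}

lemma dist_eq_dist_add_one_of_mem_behind (hxv : G.Reachable x v) (huv : G.Adj u v)
    (hx : x ∈ G.behind u v) : G.dist x v = G.dist x u + 1 := by
  classical
  have hle : G.dist x v ≤ G.dist x u + 1 := by
    simpa [dist_eq_one_iff_adj.2 huv] using huv.reachable.dist_triangle_right x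
  obtain ⟨p, hp, hlen⟩ := hxv.exists_path_of_dist
  have hu : u ∈ p.support := hx p hp
  have hlt : G.dist x u < G.dist x v :=
    calc G.dist x u ≤ (p.takeUntil u hu).length := dist_le _
      _ < p.length := p.length_takeUntil_lt_length hu huv.ne
      _ = G.dist x v := hlen
  omega

lemma notMem_behind_swap_of_mem_behind (hxv : G.Reachable x v) (huv : G.Adj u v)
    (hx : x ∈ G.behind u v) : x ∉ G.behind v u := by
  classical
  obtain ⟨p, hp, -⟩ := hxv.exists_path_of_dist
  have hu : u ∈ p.support := hx p hp
  exact fun hx' ↦ Walk.endpoint_notMem_support_takeUntil hp hu huv.ne.symm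
    (hx' _ (hp.takeUntil hu))

lemma IsAcyclic.mem_behind_swap_of_notMem_behind (hac : G.IsAcyclic) (huv : G.Adj u v)
    (hx : x ∉ G.behind u v) : x ∈ G.behind v u := by
  intro p hp
  obtain ⟨q, hq, hu⟩ : ∃ q : G.Walk x v, q.IsPath ∧ u ∉ q.support := by
    simpa [behind] using hx
  exact hac.mem_support_of_ne_mem_support_of_adj_of_isPath hp hq huv hu

open Classical in
lemma dist_sub_dist_eq_of_connected_of_isAcyclic (hc : G.Connected) (hac : G.IsAcyclic)
    (huv : G.Adj u v) (x : V) :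
    (G.dist x v : ℤ) - G.dist x u =
      (if x ∈ G.behind u v then 1 else 0) - (if x ∈ G.behind v u then 1 else 0) := by
  by_cases hx : x ∈ G.behind u v
  · rw [dist_eq_dist_add_one_of_mem_behind (hc x v) huv hx,
      if_pos hx, if_neg (notMem_behind_swap_of_mem_behind (hc x v) huv hx)]
    push_cast
    ring
  · have hx' := hac.mem_behind_swap_of_notMem_behind huv hx
    rw [dist_eq_dist_add_one_of_mem_behind (hc x u) huv.symm hx', if_neg hx, if_pos hx']
    push_cast
    ring

lemma sum_dist_sub_sum_dist_eq_ncard_sub_ncard [Fintype V] (hc : G.Connected)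
    (hac : G.IsAcyclic) (huv : G.Adj u v) :
    ∑ x, (G.dist x v : ℤ) - ∑ x, (G.dist x u : ℤ) =
      (G.behind u v).ncard - (G.behind v u).ncard := by
  classical
  rw [← Finset.sum_sub_distrib]
  simp only [dist_sub_dist_eq_of_connected_of_isAcyclic hc hac huv, Finset.sum_sub_distrib,
    Finset.sum_ite_mem_eq_ncard]

end SimpleGraph

/-- Moving the single leader across an edge `{u,v}` of a tree changes the total
variance by `(1/2)(n_u - n_v)`, where `n_u`, `n_v` are the sizes of the two components
of the tree minus the edge; hence moving toward the larger component strictly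
decreases the total variance. -/
theorem leader_move_total_variance_change {V : Type*} [Fintype V] [DecidableEq V]
    (G : SimpleGraph V) (hT : G.Connected ∧ G.IsAcyclic)
    (u v : V) (huv : G.Adj u v)
    (nu nv : ℕ)
    (hnu : nu = Set.ncard {x : V | ∀ q : G.Walk x v, q.IsPath → u ∈ q.support})
    (hnv : nv = Set.ncard {x : V | ∀ q : G.Walk x u, q.IsPath → v ∈ q.support}) :
    ((1 : ℝ) / 2) * (∑ i ∈ Finset.univ.erase v, (G.dist i v : ℝ)) -
        (1 / 2) * (∑ i ∈ Finset.univ.erase u, (G.dist i u : ℝ))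
      = (1 / 2) * ((nu : ℝ) - (nv : ℝ)) ∧
    (nu < nv →
      (1 / 2) * (∑ i ∈ Finset.univ.erase v, (G.dist i v : ℝ)) <
        (1 / 2) * (∑ i ∈ Finset.univ.erase u, (G.dist i u : ℝ))) := by
  have hdiff : ∑ i, (G.dist i v : ℝ) - ∑ i, (G.dist i u : ℝ) = (nu : ℝ) - nv := by
    rw [hnu, hnv]
    exact_mod_cast G.sum_dist_sub_sum_dist_eq_ncard_sub_ncard hT.1 hT.2 huv
  rw [Finset.sum_erase _ (by simp), Finset.sum_erase _ (by simp)]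
  refine ⟨by linarith, fun hlt ↦ ?_⟩
  have : (nu : ℝ) < nv := by exact_mod_cast hlt
  linarith
end
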